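/- arXiv:1206.0847 — 4 statements merged into one kernel-verified Lean document; each statement's English description precedes it below -/
import Mathlib

section
/- For any h > 0, (XᵀX + hI_p)⁻¹XᵀXθ − θ = −(h⁻¹XᵀX + I_p)⁻¹θ = −Q(h⁻¹D² + I_r)⁻¹Qᵀθ; consequently, under the linear model y = Xβ + ε with E ε = 0, the bias of the ridge regression estimator satisfies E θ̂ − θ = −Q(h⁻¹D² + I_r)⁻¹Qᵀθ. -/
open Matrix MeasureTheory

section aux
variable {p r : ℕ} (Q : Matrix (Fin p) (Fin r) ℝ)

lemma sandwich (hQ : Qᵀ * Q = 1) (B C : Matrix (Fin r) (Fin r) ℝ) :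
    (Q * B * Qᵀ) * (Q * C * Qᵀ) = Q * (B * C) * Qᵀ := by
  simp only [Matrix.mul_assoc]
  rw [← Matrix.mul_assoc Qᵀ Q, hQ, Matrix.one_mul]

lemma smul_sandwich (a : ℝ) (E : Matrix (Fin r) (Fin r) ℝ) :
    a • (Q * E * Qᵀ) = Q * (a • E) * Qᵀ := by
  rw [Matrix.mul_smul, Matrix.smul_mul]

lemma key_inv (hQ : Qᵀ * Q = 1) (d : Fin r → ℝ) (h : ℝ) (hh : 0 < h) :
    (Q * Matrix.diagonal (fun i => d i ^ 2) * Qᵀ + h • 1) *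
      (h⁻¹ • (1 - Q * Qᵀ) + Q * Matrix.diagonal (fun i => (d i ^ 2 + h)⁻¹) * Qᵀ) = 1 := by
  set D2 : Matrix (Fin r) (Fin r) ℝ := Matrix.diagonal (fun i => d i ^ 2) with hD2
  set E : Matrix (Fin r) (Fin r) ℝ := Matrix.diagonal (fun i => (d i ^ 2 + h)⁻¹) with hE
  have hne : ∀ i, d i ^ 2 + h ≠ 0 := fun i => by positivity
  have hDE : D2 * E + h • E = 1 := by
    rw [hD2, hE]
    ext i j
    rcases eq_or_ne i j with rfl | hij
    · simp [Matrix.diagonal_apply_eq, Matrix.one_apply_eq]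
      field_simp
    · simp [Matrix.diagonal_apply_ne _ hij, Matrix.one_apply_ne hij]
  have h1 : (Q * D2 * Qᵀ) * (Q * Qᵀ) = Q * D2 * Qᵀ := by
    simp only [Matrix.mul_assoc]
    rw [← Matrix.mul_assoc Qᵀ Q, hQ, Matrix.one_mul]
  rw [Matrix.add_mul, Matrix.mul_add, Matrix.mul_add, Matrix.mul_smul,
    Matrix.mul_sub, Matrix.mul_one, h1, sub_self, smul_zero, zero_add,
    sandwich Q hQ, Matrix.smul_mul, Matrix.one_mul, smul_smul,
    mul_inv_cancel₀ (ne_of_gt hh), one_smul, Matrix.smul_mul, Matrix.one_mul,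
    smul_sandwich, add_left_comm, ← Matrix.add_mul, ← Matrix.mul_add, hDE,
    Matrix.mul_one, sub_add_cancel]

lemma key_inv' (hQ : Qᵀ * Q = 1) (d : Fin r → ℝ) (h : ℝ) (hh : 0 < h) :
    (h⁻¹ • (1 - Q * Qᵀ) + Q * Matrix.diagonal (fun i => (d i ^ 2 + h)⁻¹) * Qᵀ) *
      (Q * Matrix.diagonal (fun i => d i ^ 2) * Qᵀ + h • 1) = 1 := by
  set D2 : Matrix (Fin r) (Fin r) ℝ := Matrix.diagonal (fun i => d i ^ 2) with hD2
  set E : Matrix (Fin r) (Fin r) ℝ := Matrix.diagonal (fun i => (d i ^ 2 + h)⁻¹) with hE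
  have hne : ∀ i, d i ^ 2 + h ≠ 0 := fun i => by positivity
  have hED : E * D2 + h • E = 1 := by
    rw [hD2, hE]
    ext i j
    rcases eq_or_ne i j with rfl | hij
    · simp [Matrix.diagonal_apply_eq, Matrix.one_apply_eq]
      field_simp
    · simp [Matrix.diagonal_apply_ne _ hij, Matrix.one_apply_ne hij]
  have h1 : (Q * Qᵀ) * (Q * D2 * Qᵀ) = Q * D2 * Qᵀ := by
    simp only [Matrix.mul_assoc]
    rw [← Matrix.mul_assoc Qᵀ Q, hQ, Matrix.one_mul]
  rw [Matrix.add_mul, Matrix.mul_add, Matrix.mul_add, Matrix.smul_mul,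
    Matrix.sub_mul, Matrix.one_mul, h1, sub_self, smul_zero, zero_add,
    sandwich Q hQ, Matrix.mul_smul, Matrix.mul_one, smul_smul,
    mul_inv_cancel₀ (ne_of_gt hh), one_smul, Matrix.mul_smul, Matrix.mul_one,
    smul_sandwich]
  have key : Q * (E * D2) * Qᵀ + Q * (h • E) * Qᵀ = Q * Qᵀ := by
    rw [← Matrix.add_mul, ← Matrix.mul_add, hED, Matrix.mul_one]
  rw [key, sub_add_cancel]

end aux

/-- Bias of the ridge regression estimator: for any `h > 0`,
`(XᵀX + hI_p)⁻¹ XᵀX θ − θ = −(h⁻¹XᵀX + I_p)⁻¹ θ = −Q (h⁻¹D² + I_r)⁻¹ Qᵀ θ`;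
consequently, under the linear model `y = Xβ + ε` with `E ε = 0`, the bias of the ridge
regression estimator `θ̂ = (XᵀX + hI_p)⁻¹ Xᵀ y` of the projection `θ = QQᵀβ` satisfies
`E θ̂ − θ = −Q (h⁻¹D² + I_r)⁻¹ Qᵀ θ`. -/
theorem ridge_bias_formula
    {n p r : ℕ} {Ω : Type*} [MeasurableSpace Ω] (μ : Measure Ω) [IsProbabilityMeasure μ]
    (X : Matrix (Fin n) (Fin p) ℝ)
    (P : Matrix (Fin n) (Fin r) ℝ) (D : Matrix (Fin r) (Fin r) ℝ)
    (Q : Matrix (Fin p) (Fin r) ℝ)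
    (hrank : X.rank = r)
    (hSVD : X = P * D * Qᵀ) (hP : Pᵀ * P = 1) (hQ : Qᵀ * Q = 1)
    (d : Fin r → ℝ) (hDdiag : D = Matrix.diagonal d) (hd : ∀ i, d i ≠ 0)
    (β : Fin p → ℝ) (ε : Ω → Fin n → ℝ)
    (hεint : ∀ i, Integrable (fun ω => ε ω i) μ)
    (hεmean : ∀ i, ∫ ω, ε ω i ∂μ = 0)
    (h : ℝ) (hh : 0 < h) :
    let θ : Fin p → ℝ := (Q * Qᵀ) *ᵥ β
    let θhat : Ω → Fin p → ℝ := fun ω => (Xᵀ * X + h • 1)⁻¹ *ᵥ (Xᵀ *ᵥ (X *ᵥ β + ε ω))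
    ((Xᵀ * X + h • 1)⁻¹ * (Xᵀ * X)) *ᵥ θ - θ = -((h⁻¹ • (Xᵀ * X) + 1)⁻¹ *ᵥ θ) ∧
    -((h⁻¹ • (Xᵀ * X) + 1)⁻¹ *ᵥ θ) = -((Q * (h⁻¹ • D ^ 2 + 1)⁻¹ * Qᵀ) *ᵥ θ) ∧
    (fun j => ∫ ω, θhat ω j ∂μ) - θ = -((Q * (h⁻¹ • D ^ 2 + 1)⁻¹ * Qᵀ) *ᵥ θ) := by
  intro θ θhat
  have hne : ∀ i, d i ^ 2 + h ≠ 0 := fun i => by positivity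
  set D2 : Matrix (Fin r) (Fin r) ℝ := Matrix.diagonal (fun i => d i ^ 2) with hD2
  set E : Matrix (Fin r) (Fin r) ℝ := Matrix.diagonal (fun i => (d i ^ 2 + h)⁻¹) with hE
  -- A = XᵀX = Q D2 Qᵀ
  have hXtX : Xᵀ * X = Q * D2 * Qᵀ := by
    rw [hSVD]
    have ht : (P * D * Qᵀ)ᵀ = Q * D * Pᵀ := by
      simp [Matrix.transpose_mul, hDdiag, Matrix.diagonal_transpose, Matrix.mul_assoc]
    rw [ht]
    calc Q * D * Pᵀ * (P * D * Qᵀ) = Q * D * (Pᵀ * P) * (D * Qᵀ) := by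
          simp only [Matrix.mul_assoc]
      _ = Q * (D * D) * Qᵀ := by rw [hP]; simp only [Matrix.mul_one, Matrix.mul_assoc]
      _ = Q * D2 * Qᵀ := by
          rw [hDdiag, Matrix.diagonal_mul_diagonal, hD2]
          congr 2
          funext i
          ring
  set N : Matrix (Fin p) (Fin p) ℝ := h⁻¹ • (1 - Q * Qᵀ) + Q * E * Qᵀ with hN
  set M : Matrix (Fin p) (Fin p) ℝ := Xᵀ * X + h • 1 with hM
  have hMN : M * N = 1 := by rw [hM, hN, hXtX, hE]; exact key_inv Q hQ d h hh
  have hNM : N * M = 1 := by rw [hM, hN, hXtX, hE]; exact key_inv' Q hQ d h hh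
  have hMinv : M⁻¹ = N := Matrix.inv_eq_right_inv hMN
  have hM2 : h⁻¹ • (Xᵀ * X) + 1 = h⁻¹ • M := by
    rw [hM, smul_add, smul_smul, inv_mul_cancel₀ hh.ne', one_smul]
  have hM2inv : (h⁻¹ • (Xᵀ * X) + 1)⁻¹ = h • N := by
    apply Matrix.inv_eq_right_inv
    rw [hM2, Matrix.smul_mul, Matrix.mul_smul, smul_smul, inv_mul_cancel₀ hh.ne',
      one_smul, hMN]
  have hDE : (D2 + h • 1) * E = 1 := by
    rw [hD2, hE, Matrix.smul_one_eq_diagonal, Matrix.diagonal_add,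
      Matrix.diagonal_mul_diagonal, ← Matrix.diagonal_one]
    exact congrArg _ (funext fun i => mul_inv_cancel₀ (hne i))
  have hE3 : (h⁻¹ • D ^ 2 + 1)⁻¹ = h • E := by
    apply Matrix.inv_eq_right_inv
    have hD2eq : D ^ 2 = D2 := by
      rw [hDdiag, pow_two, Matrix.diagonal_mul_diagonal, hD2]
      congr 1; funext i; ring
    have : h⁻¹ • D ^ 2 + 1 = h⁻¹ • (D2 + h • 1) := by
      rw [hD2eq, smul_add, smul_smul, inv_mul_cancel₀ hh.ne', one_smul]
    rw [this, Matrix.smul_mul, Matrix.mul_smul, smul_smul, inv_mul_cancel₀ hh.ne',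
      one_smul, hDE]
  -- N * A = 1 - h • N
  have hNA : N * (Xᵀ * X) = 1 - h • N := by
    have hA : Xᵀ * X = M - h • 1 := by rw [hM, add_sub_cancel_right]
    rw [hA, Matrix.mul_sub, hNM, Matrix.mul_smul, Matrix.mul_one]
  -- (1 - QQᵀ) kills θ
  have hθ : (Q * Qᵀ) *ᵥ θ = θ := by
    show (Q * Qᵀ) *ᵥ ((Q * Qᵀ) *ᵥ β) = (Q * Qᵀ) *ᵥ β
    rw [Matrix.mulVec_mulVec]
    congr 1
    rw [Matrix.mul_assoc, ← Matrix.mul_assoc Qᵀ Q, hQ, Matrix.one_mul]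
  have hsmulN : (h • N) *ᵥ θ = (Q * (h • E) * Qᵀ) *ᵥ θ := by
    have hNsplit : h • N = (1 - Q * Qᵀ) + Q * (h • E) * Qᵀ := by
      rw [hN, smul_add, smul_smul, mul_inv_cancel₀ hh.ne', one_smul, smul_sandwich]
    rw [hNsplit, Matrix.add_mulVec, Matrix.sub_mulVec, Matrix.one_mulVec, hθ,
      sub_self, zero_add]
  have conj1 : ((Xᵀ * X + h • 1)⁻¹ * (Xᵀ * X)) *ᵥ θ - θ = -((h⁻¹ • (Xᵀ * X) + 1)⁻¹ *ᵥ θ) := by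
    rw [← hM, hMinv, hM2inv, hNA, Matrix.sub_mulVec, Matrix.one_mulVec]
    abel
  have conj2 : -((h⁻¹ • (Xᵀ * X) + 1)⁻¹ *ᵥ θ) = -((Q * (h⁻¹ • D ^ 2 + 1)⁻¹ * Qᵀ) *ᵥ θ) := by
    rw [hM2inv, hE3, hsmulN]
  refine ⟨conj1, conj2, ?_⟩
  -- expectation
  have hmean : (fun j => ∫ ω, θhat ω j ∂μ) = (N * (Xᵀ * X)) *ᵥ θ := by
    have hAθ : (Xᵀ * X) *ᵥ θ = (Xᵀ * X) *ᵥ β := by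
      show (Xᵀ * X) *ᵥ ((Q * Qᵀ) *ᵥ β) = (Xᵀ * X) *ᵥ β
      rw [Matrix.mulVec_mulVec]
      congr 1
      rw [hXtX, Matrix.mul_assoc (Q * D2) Qᵀ (Q * Qᵀ), ← Matrix.mul_assoc Qᵀ Q, hQ,
        Matrix.one_mul]
    funext j
    have hsplit : ∀ ω, θhat ω j
        = ((N * (Xᵀ * X)) *ᵥ β) j + ∑ k, (N * Xᵀ) j k * ε ω k := by
      intro ω
      show ((Xᵀ * X + h • 1)⁻¹ *ᵥ (Xᵀ *ᵥ (X *ᵥ β + ε ω))) j = _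
      rw [← hM, hMinv, Matrix.mulVec_add, Matrix.mulVec_add, Matrix.mulVec_mulVec,
        Matrix.mulVec_mulVec, ← Matrix.mul_assoc]
      simp [Matrix.mulVec, dotProduct]
    calc ∫ ω, θhat ω j ∂μ
        = ∫ ω, (((N * (Xᵀ * X)) *ᵥ β) j + ∑ k, (N * Xᵀ) j k * ε ω k) ∂μ := by
          congr 1; funext ω; exact hsplit ω
      _ = ((N * (Xᵀ * X)) *ᵥ β) j := by
          rw [integral_add (integrable_const _)
            (integrable_finset_sum _ (fun k _ => (hεint k).const_mul _)),
            integral_finset_sum _ (fun k _ => (hεint k).const_mul _)]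
          simp [MeasureTheory.integral_const_mul, hεmean]
      _ = ((N * (Xᵀ * X)) *ᵥ θ) j := by
          rw [show (N * (Xᵀ * X)) *ᵥ θ = (N * (Xᵀ * X)) *ᵥ β from by
            rw [← Matrix.mulVec_mulVec, hAθ, Matrix.mulVec_mulVec]]
  rw [hmean]
  calc (N * (Xᵀ * X)) *ᵥ θ - θ = ((Xᵀ * X + h • 1)⁻¹ * (Xᵀ * X)) *ᵥ θ - θ := by
        rw [← hM, hMinv]
    _ = -((Q * (h⁻¹ • D ^ 2 + 1)⁻¹ * Qᵀ) *ᵥ θ) := by rw [conj1, conj2]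
end

section
/- If θ lies in the row space R(X) of X and λ₁ denotes the smallest positive eigenvalue of XᵀX, then for any h > 0, ‖(h⁻¹XᵀX + I_p)⁻¹θ‖ ≤ (h/(λ₁ + h))‖θ‖ ≤ (h/λ₁)‖θ‖, where ‖·‖ is the Euclidean norm; i.e., the norm of the bias of the ridge regression estimator of θ is at most (h/λ₁)‖θ‖. -/
/-!
Write `A = XᵀX` and `w = (h⁻¹A + 1)⁻¹θ`, so that `w + h⁻¹Aw = θ`. Since `θ = Xᵀv` lies in
`range Xᵀ = range A`, so does `w`; expanding `w` in an orthonormal eigenbasis of the positive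
operator `A`, it has no component along the kernel, hence `λ₁‖w‖² ≤ ⟪Aw, w⟫`. Pairing
`w + h⁻¹Aw = θ` with `w` and using Cauchy–Schwarz gives `(1 + λ₁/h)‖w‖² ≤ ‖θ‖‖w‖`.
-/

open Matrix

open scoped RealInnerProductSpace

namespace LinearMap

variable {E : Type*} [NormedAddCommGroup E] [InnerProductSpace ℝ E] [FiniteDimensional ℝ E]
  {T : E →ₗ[ℝ] E} {c : ℝ}

theorem IsPositive.mul_norm_sq_le_inner_map_self (hT : T.IsPositive)
    (hc : ∀ μ, 0 < μ → Module.End.HasEigenvalue T μ → c ≤ μ) {w : E} (hw : w ∈ range T) :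
    c * ‖w‖ ^ 2 ≤ ⟪T w, w⟫ := by
  obtain ⟨z, rfl⟩ := hw
  -- `T z` is orthogonal to every eigenvector of eigenvalue `0`, since `⟪T z, b⟫ = ⟪z, T b⟫`.
  set b := hT.isSymmetric.eigenvectorBasis rfl
  set μ := hT.isSymmetric.eigenvalues rfl
  have hTb (x : E) (i) : ⟪T x, b i⟫ = μ i * ⟪x, b i⟫ := by
    rw [hT.isSymmetric, hT.isSymmetric.apply_eigenvectorBasis, real_inner_smul_right]
    rfl
  have hterm (i) : c * (⟪T z, b i⟫ * ⟪b i, T z⟫) ≤ ⟪T (T z), b i⟫ * ⟪b i, T z⟫ := by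
    have hμ : 0 ≤ μ i := hT.nonneg_eigenvalues rfl i
    rw [hTb (T z), real_inner_comm (T z) (b i), mul_assoc]
    rcases hμ.eq_or_lt with hμ | hμ
    · simp [hTb z, ← hμ]
    · exact mul_le_mul_of_nonneg_right
        (hc _ hμ (hT.isSymmetric.hasEigenvalue_eigenvalues rfl i)) (mul_self_nonneg _)
  calc c * ‖T z‖ ^ 2 = ∑ i, c * (⟪T z, b i⟫ * ⟪b i, T z⟫) := by
        rw [← Finset.mul_sum, b.sum_inner_mul_inner, real_inner_self_eq_norm_sq]
    _ ≤ ∑ i, ⟪T (T z), b i⟫ * ⟪b i, T z⟫ := Finset.sum_le_sum fun i _ => hterm i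
    _ = ⟪T (T z), T z⟫ := b.sum_inner_mul_inner _ _

theorem IsPositive.one_add_mul_mul_norm_le_norm (hT : T.IsPositive)
    (hc : ∀ μ, 0 < μ → Module.End.HasEigenvalue T μ → c ≤ μ) {a : ℝ} (ha : 0 ≤ a) {w θ : E}
    (hθ : θ ∈ range T) (hw : w + a • T w = θ) :
    (1 + a * c) * ‖w‖ ≤ ‖θ‖ := by
  have hw_range : w ∈ range T := by
    rw [eq_sub_of_add_eq hw]
    exact sub_mem hθ (Submodule.smul_mem _ a (mem_range_self T w))
  have hsq : (1 + a * c) * ‖w‖ ^ 2 ≤ ‖θ‖ * ‖w‖ :=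
    calc (1 + a * c) * ‖w‖ ^ 2 = ‖w‖ ^ 2 + a * (c * ‖w‖ ^ 2) := by ring
      _ ≤ ‖w‖ ^ 2 + a * ⟪T w, w⟫ := by
        gcongr; exact hT.mul_norm_sq_le_inner_map_self hc hw_range
      _ = ⟪θ, w⟫ := by
        rw [← hw, inner_add_left, real_inner_smul_left, real_inner_self_eq_norm_sq]
      _ ≤ ‖θ‖ * ‖w‖ := real_inner_le_norm θ w
  rcases (norm_nonneg w).eq_or_lt with hw0 | hw0
  · rw [← hw0, mul_zero]; exact norm_nonneg θ
  · nlinarith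

end LinearMap

namespace Matrix

open WithLp (toLp ofLp)

variable {n : Type*} [Fintype n] [DecidableEq n]

theorem hasEigenvalue_mulVecLin_of_toLpLin {R : Type*} [CommRing R] {p : ENNReal}
    {A : Matrix n n R} {μ : R} (h : Module.End.HasEigenvalue (toLpLin p p A) μ) :
    Module.End.HasEigenvalue A.mulVecLin μ := by
  obtain ⟨x, hx_mem, hx_ne⟩ := h.exists_hasEigenvector
  refine Module.End.hasEigenvalue_of_hasEigenvector (x := ofLp x) ⟨?_, by simpa using hx_ne⟩
  exact Module.End.mem_eigenspace_iff.2 (congrArg ofLp (Module.End.mem_eigenspace_iff.1 hx_mem))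

theorem PosSemidef.smul_add_one_inv_mulVec_add {A : Matrix n n ℝ} (hA : A.PosSemidef) {a : ℝ}
    (ha : 0 ≤ a) (θ : n → ℝ) :
    (a • A + 1)⁻¹ *ᵥ θ + a • (A *ᵥ ((a • A + 1)⁻¹ *ᵥ θ)) = θ := by
  have hM : (a • A + 1).PosDef := PosDef.posSemidef_add (hA.smul ha) PosDef.one
  have hM_det : IsUnit (a • A + 1).det := (isUnit_iff_isUnit_det _).1 hM.isUnit
  calc _ = (a • A + 1) *ᵥ ((a • A + 1)⁻¹ *ᵥ θ) := by
        rw [add_mulVec, smul_mulVec, one_mulVec, add_comm]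
    _ = θ := by rw [mulVec_mulVec, mul_nonsing_inv _ hM_det, one_mulVec]

variable {m : Type*} [Fintype m] [DecidableEq m]

theorem toEuclideanLin_transpose_mul_self (X : Matrix m n ℝ) :
    toEuclideanLin (Xᵀ * X) = (toEuclideanLin X).adjoint ∘ₗ toEuclideanLin X := by
  rw [← toEuclideanLin_conjTranspose_eq_adjoint, conjTranspose_eq_transpose_of_trivial]
  exact toLpLin_mul_same 2 _ _

theorem isPositive_toEuclideanLin_transpose_mul_self (X : Matrix m n ℝ) :
    (toEuclideanLin (Xᵀ * X)).IsPositive := by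
  rw [toEuclideanLin_transpose_mul_self]
  exact (toEuclideanLin X).isPositive_adjoint_comp_self

theorem toLp_transpose_mulVec_mem_range (X : Matrix m n ℝ) (v : m → ℝ) :
    toLp 2 (Xᵀ *ᵥ v) ∈ LinearMap.range (toEuclideanLin (Xᵀ * X)) := by
  rw [toEuclideanLin_transpose_mul_self, LinearMap.range_adjoint_comp_self,
    ← toEuclideanLin_conjTranspose_eq_adjoint, conjTranspose_eq_transpose_of_trivial]
  exact ⟨toLp 2 v, rfl⟩

end Matrix

theorem EuclideanSpace.norm_toLp_eq_sqrt {n : Type*} [Fintype n] (f : n → ℝ) :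
    ‖WithLp.toLp 2 f‖ = √(∑ j, f j ^ 2) := by
  simp [EuclideanSpace.norm_eq]

open WithLp (toLp) in
theorem ridge_bias_norm_bound_general
    {n p : ℕ} (X : Matrix (Fin n) (Fin p) ℝ)
    (lam1 : ℝ) (hlam_pos : 0 < lam1)
    (hlam_min : ∀ lam : ℝ, 0 < lam →
      Module.End.HasEigenvalue (Xᵀ * X).mulVecLin lam → lam1 ≤ lam)
    (θ : Fin p → ℝ) (hθ : ∃ v : Fin n → ℝ, θ = Xᵀ *ᵥ v)
    (h : ℝ) (hh : 0 < h) :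
    Real.sqrt (∑ j, ((h⁻¹ • (Xᵀ * X) + 1)⁻¹ *ᵥ θ) j ^ 2)
        ≤ (h / (lam1 + h)) * Real.sqrt (∑ j, θ j ^ 2) ∧
    (h / (lam1 + h)) * Real.sqrt (∑ j, θ j ^ 2)
        ≤ (h / lam1) * Real.sqrt (∑ j, θ j ^ 2) := by
  obtain ⟨v, rfl⟩ := hθ
  set w := (h⁻¹ • (Xᵀ * X) + 1)⁻¹ *ᵥ (Xᵀ *ᵥ v)
  have hT := isPositive_toEuclideanLin_transpose_mul_self X
  have hw : toLp 2 w + h⁻¹ • toEuclideanLin (Xᵀ * X) (toLp 2 w) = toLp 2 (Xᵀ *ᵥ v) := by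
    rw [← (isPositive_toEuclideanLin_iff.1 hT).smul_add_one_inv_mulVec_add
      (inv_nonneg.2 hh.le) (Xᵀ *ᵥ v)]
    rfl
  have hshrink : (1 + h⁻¹ * lam1) * ‖toLp 2 w‖ ≤ ‖toLp 2 (Xᵀ *ᵥ v)‖ :=
    hT.one_add_mul_mul_norm_le_norm
      (fun μ hμ he => hlam_min μ hμ (hasEigenvalue_mulVecLin_of_toLpLin he))
      (inv_nonneg.2 hh.le) (toLp_transpose_mulVec_mem_range X v) hw
  rw [← EuclideanSpace.norm_toLp_eq_sqrt, ← EuclideanSpace.norm_toLp_eq_sqrt]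
  have hfactor : 1 + h⁻¹ * lam1 = (lam1 + h) / h := by field_simp; ring
  constructor
  · rw [hfactor, div_mul_eq_mul_div, div_le_iff₀ hh] at hshrink
    rw [div_mul_eq_mul_div, le_div_iff₀ (by positivity)]
    linarith
  · gcongr
    linarith

/-- If `θ` lies in the row space of `X` (the column space of `Xᵀ`) and `λ₁` is the
smallest positive eigenvalue of `XᵀX`, then for any `h > 0`,
`‖(h⁻¹XᵀX + I_p)⁻¹ θ‖ ≤ (h/(λ₁+h)) ‖θ‖ ≤ (h/λ₁) ‖θ‖` in the Euclidean norm; i.e., the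
norm of the bias of the ridge regression estimator of `θ` is at most `(h/λ₁) ‖θ‖`. -/
theorem ridge_bias_norm_bound
    {n p : ℕ} (X : Matrix (Fin n) (Fin p) ℝ)
    (lam1 : ℝ) (hlam_pos : 0 < lam1)
    (hlam_eig : Module.End.HasEigenvalue (Xᵀ * X).mulVecLin lam1)
    (hlam_min : ∀ lam : ℝ, 0 < lam →
      Module.End.HasEigenvalue (Xᵀ * X).mulVecLin lam → lam1 ≤ lam)
    (θ : Fin p → ℝ) (hθ : ∃ v : Fin n → ℝ, θ = Xᵀ *ᵥ v)
    (h : ℝ) (hh : 0 < h) :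
    Real.sqrt (∑ j, ((h⁻¹ • (Xᵀ * X) + 1)⁻¹ *ᵥ θ) j ^ 2)
        ≤ (h / (lam1 + h)) * Real.sqrt (∑ j, θ j ^ 2) ∧
    (h / (lam1 + h)) * Real.sqrt (∑ j, θ j ^ 2)
        ≤ (h / lam1) * Real.sqrt (∑ j, θ j ^ 2) :=
  ridge_bias_norm_bound_general X lam1 hlam_pos hlam_min θ hθ h hh
end

section
/- If θ lies in the row space R(X) of X and λ₁ denotes the smallest positive eigenvalue of XᵀX, then for any h > 0, ‖X(h⁻¹XᵀX + I_p)⁻¹θ‖² ≤ (h²/λ₁)‖θ‖²; i.e., the squared norm of X times the bias of the ridge regression estimator of θ is at most h²λ₁⁻¹‖θ‖². -/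
/-!
Put `A = XᵀX` and `b = (h⁻¹A + 1)⁻¹θ`, so that the left-hand side is `⟪b, Ab⟫`. Every eigenvalue
`μ` of the positive semidefinite `A` is either `0` or at least `λ₁`, hence `λ₁μ ≤ μ²`; by the
functional calculus `λ₁A ≤ A²`, i.e. `λ₁⟪b, Ab⟫ ≤ ‖Ab‖² = h²‖h⁻¹Ab‖²`. Finally
`θ = b + h⁻¹Ab` with `⟪b, h⁻¹Ab⟫ ≥ 0`, so `‖h⁻¹Ab‖ ≤ ‖θ‖`.
-/

open Matrix

theorem smul_le_mul_self_of_spectrum_pos_le {A : Type*} [Ring A] [StarRing A] [Algebra ℝ A]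
    [TopologicalSpace A] [ContinuousFunctionalCalculus ℝ A IsSelfAdjoint]
    [PartialOrder A] [StarOrderedRing A] [NonnegSpectrumClass ℝ A]
    {a : A} (ha : 0 ≤ a) {c : ℝ} (hc : ∀ μ ∈ spectrum ℝ a, 0 < μ → c ≤ μ) :
    c • a ≤ a * a := by
  have : IsSelfAdjoint a := ha.isSelfAdjoint
  rw [← cfc_const_mul_id c a, ← sq, ← cfc_pow_id (R := ℝ) a 2]
  refine cfc_mono fun μ hμ => ?_
  rcases (spectrum_nonneg_of_nonneg ha hμ).eq_or_lt with h0 | hpos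
  · simp [← h0]
  · rw [sq]
    exact mul_le_mul_of_nonneg_right (hc μ hμ hpos) hpos.le

namespace Matrix

variable {m : Type*} [Fintype m]

theorem sum_sq_mulVec {R n : Type*} [CommSemiring R] [Fintype n] (X : Matrix n m R)
    (b : m → R) : ∑ i, (X *ᵥ b) i ^ 2 = b ⬝ᵥ (Xᵀ * X) *ᵥ b := by
  rw [← mulVec_mulVec, dotProduct_mulVec, ← mulVec_transpose, transpose_transpose]
  simp only [dotProduct, sq]

theorem IsSymm.dotProduct_mul_self_mulVec {R : Type*} [CommSemiring R] {A : Matrix m m R}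
    (hA : A.IsSymm) (b : m → R) : b ⬝ᵥ (A * A) *ᵥ b = (A *ᵥ b) ⬝ᵥ (A *ᵥ b) := by
  rw [← mulVec_mulVec, dotProduct_mulVec, ← mulVec_transpose, hA.eq, dotProduct_comm]

theorem dotProduct_self_le_of_dotProduct_nonneg {R : Type*} [CommRing R] [LinearOrder R]
    [IsStrictOrderedRing R] {x y : m → R} (h : 0 ≤ x ⬝ᵥ y) :
    x ⬝ᵥ x ≤ (x + y) ⬝ᵥ (x + y) := by
  have hy : 0 ≤ y ⬝ᵥ y := Finset.sum_nonneg fun i _ => mul_self_nonneg (y i)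
  rw [add_dotProduct, dotProduct_add, dotProduct_add, dotProduct_comm y x]
  linarith

variable [DecidableEq m]

theorem PosSemidef.mul_dotProduct_mulVec_le {A : Matrix m m ℝ} (hA : A.PosSemidef) {c : ℝ}
    (hc : ∀ μ ∈ spectrum ℝ A, 0 < μ → c ≤ μ) (b : m → ℝ) :
    c * (b ⬝ᵥ A *ᵥ b) ≤ (A *ᵥ b) ⬝ᵥ (A *ᵥ b) := by
  open scoped MatrixOrder in
  have hle : (A * A - c • A).PosSemidef := smul_le_mul_self_of_spectrum_pos_le hA.nonneg hc
  have := hle.dotProduct_mulVec_nonneg b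
  rw [star_trivial, sub_mulVec, dotProduct_sub, smul_mulVec, dotProduct_smul, smul_eq_mul,
    (isHermitian_iff_isSymm.mp hA.1).dotProduct_mul_self_mulVec] at this
  linarith

theorem PosSemidef.dotProduct_mulVec_self_le_add_one {B : Matrix m m ℝ} (hB : B.PosSemidef)
    (b : m → ℝ) : (B *ᵥ b) ⬝ᵥ (B *ᵥ b) ≤ ((B + 1) *ᵥ b) ⬝ᵥ ((B + 1) *ᵥ b) := by
  rw [add_mulVec, one_mulVec]
  refine dotProduct_self_le_of_dotProduct_nonneg ?_
  rw [dotProduct_comm]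
  simpa using hB.dotProduct_mulVec_nonneg b

end Matrix

theorem ridge_bias_X_norm_sq_bound_general
    {n p : ℕ} (X : Matrix (Fin n) (Fin p) ℝ)
    (lam1 : ℝ) (hlam_pos : 0 < lam1)
    (hlam_min : ∀ lam : ℝ, 0 < lam →
      Module.End.HasEigenvalue (Xᵀ * X).mulVecLin lam → lam1 ≤ lam)
    (θ : Fin p → ℝ)
    (h : ℝ) (hh : 0 < h) :
    ∑ i, (X *ᵥ ((h⁻¹ • (Xᵀ * X) + 1)⁻¹ *ᵥ θ)) i ^ 2
      ≤ (h ^ 2 / lam1) * ∑ j, θ j ^ 2 := by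
  set A := Xᵀ * X
  have hA : A.PosSemidef := by simpa using posSemidef_conjTranspose_mul_self X
  have hspec : ∀ μ ∈ spectrum ℝ A, 0 < μ → lam1 ≤ μ := fun μ hμ hpos =>
    hlam_min μ hpos <| Module.End.hasEigenvalue_iff_mem_spectrum.mpr <| by
      rwa [← toLin'_apply', spectrum_toLin']
  set B := h⁻¹ • A
  have hB : B.PosSemidef := hA.smul (inv_nonneg.mpr hh.le)
  set b := (B + 1)⁻¹ *ᵥ θ
  have hθ : (B + 1) *ᵥ b = θ := by
    rw [mulVec_mulVec, mul_nonsing_inv _ ((isUnit_iff_isUnit_det _).mp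
      (PosDef.posSemidef_add hB .one).isUnit), one_mulVec]
  have hAb : (A *ᵥ b) ⬝ᵥ (A *ᵥ b) = h ^ 2 * (B *ᵥ b) ⬝ᵥ (B *ᵥ b) := by
    simp only [B, smul_mulVec, dotProduct_smul, smul_dotProduct, smul_eq_mul]
    field_simp
  have hshrink : (B *ᵥ b) ⬝ᵥ (B *ᵥ b) ≤ θ ⬝ᵥ θ := hθ ▸ hB.dotProduct_mulVec_self_le_add_one b
  rw [sum_sq_mulVec, show ∑ j, θ j ^ 2 = θ ⬝ᵥ θ by simp only [dotProduct, sq],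
    div_mul_eq_mul_div, le_div_iff₀ hlam_pos]
  calc (b ⬝ᵥ A *ᵥ b) * lam1 ≤ (A *ᵥ b) ⬝ᵥ (A *ᵥ b) := by
        rw [mul_comm]; exact hA.mul_dotProduct_mulVec_le hspec b
    _ ≤ h ^ 2 * θ ⬝ᵥ θ := by rw [hAb]; gcongr

/-- If `θ` lies in the row space of `X` (the column space of `Xᵀ`) and `λ₁` is the
smallest positive eigenvalue of `XᵀX`, then for any `h > 0`,
`‖X (h⁻¹XᵀX + I_p)⁻¹ θ‖² ≤ (h²/λ₁) ‖θ‖²`; i.e., the squared Euclidean norm of `X` times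
the bias of the ridge regression estimator of `θ` is at most `h² λ₁⁻¹ ‖θ‖²`. -/
theorem ridge_bias_X_norm_sq_bound
    {n p : ℕ} (X : Matrix (Fin n) (Fin p) ℝ)
    (lam1 : ℝ) (hlam_pos : 0 < lam1)
    (hlam_eig : Module.End.HasEigenvalue (Xᵀ * X).mulVecLin lam1)
    (hlam_min : ∀ lam : ℝ, 0 < lam →
      Module.End.HasEigenvalue (Xᵀ * X).mulVecLin lam → lam1 ≤ lam)
    (θ : Fin p → ℝ) (hθ : ∃ v : Fin n → ℝ, θ = Xᵀ *ᵥ v)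
    (h : ℝ) (hh : 0 < h) :
    ∑ i, (X *ᵥ ((h⁻¹ • (Xᵀ * X) + 1)⁻¹ *ᵥ θ)) i ^ 2
      ≤ (h ^ 2 / lam1) * ∑ j, θ j ^ 2 :=
  ridge_bias_X_norm_sq_bound_general X lam1 hlam_pos hlam_min θ h hh
end

section
/- Under the linear model with deterministic design X, for any h > 0 and any l ∈ ℝᵖ with ‖l‖ = 1, the mean squared error of the ridge regression estimator satisfies E(lᵀθ̂ − lᵀθ)² ≤ σ²/h + (h/(λ₁ + h))²‖θ‖², where λ₁ is the smallest positive eigenvalue of XᵀX. -/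
/-!
With `A = XᵀX + hI` and `Xθ = Xβ`, the error is `lᵀθ̂ − lᵀθ = cᵀε − h lᵀA⁻¹θ` with `c = XA⁻¹l`,
so its second moment is `‖c‖²σ² + h²(lᵀA⁻¹θ)²`. Everything else rests on the identity
`‖Xw‖² + h‖w‖² = wᵀz` for `w = A⁻¹z`, combined with Cauchy–Schwarz. For `z = l` it gives
`‖c‖² ≤ 1/h`. For `z = θ = Xᵀv`, the push-through identity `A⁻¹Xᵀ = Xᵀ(XXᵀ + hI)⁻¹` keeps `w`
in the row space of `X`, which is orthogonal to the kernel of `XᵀX`; expanding `w` in an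
eigenbasis of `XᵀX` then only involves positive eigenvalues, so `‖Xw‖² ≥ λ₁‖w‖²` and
`(λ₁ + h)‖w‖ ≤ ‖θ‖`.
-/

open Matrix MeasureTheory ProbabilityTheory
open scoped InnerProductSpace

theorem LinearMap.IsPositive.mul_norm_sq_le_inner_of_mem_orthogonal_ker
    {E : Type*} [NormedAddCommGroup E] [InnerProductSpace ℝ E] [FiniteDimensional ℝ E]
    {T : E →ₗ[ℝ] E} (hT : T.IsPositive) {c : ℝ}
    (hc : ∀ μ : ℝ, 0 < μ → Module.End.HasEigenvalue T μ → c ≤ μ)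
    {x : E} (hx : x ∈ (LinearMap.ker T)ᗮ) :
    c * ‖x‖ ^ 2 ≤ ⟪T x, x⟫_ℝ := by
  obtain ⟨b, ev, hTb, hev⟩ : ∃ (b : OrthonormalBasis (Fin (Module.finrank ℝ E)) ℝ E)
      (ev : Fin (Module.finrank ℝ E) → ℝ), (∀ i, T (b i) = ev i • b i) ∧ ∀ i, 0 ≤ ev i :=
    ⟨_, _, hT.isSymmetric.apply_eigenvectorBasis rfl, hT.nonneg_eigenvalues rfl⟩
  have hTx : ⟪T x, x⟫_ℝ = ∑ i, ev i * ⟪b i, x⟫_ℝ ^ 2 := by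
    rw [← b.sum_inner_mul_inner]
    refine Finset.sum_congr rfl fun i _ => ?_
    rw [hT.isSymmetric, hTb, real_inner_smul_right, real_inner_comm x]
    ring
  have hx2 : ‖x‖ ^ 2 = ∑ i, ⟪b i, x⟫_ℝ ^ 2 := by
    rw [← real_inner_self_eq_norm_sq, ← b.sum_inner_mul_inner]
    simp_rw [real_inner_comm x, sq]
  rw [hTx, hx2, Finset.mul_sum]
  refine Finset.sum_le_sum fun i _ => ?_
  rcases (hev i).eq_or_lt with hzero | hpos
  · have hker : b i ∈ LinearMap.ker T := by simp [hTb, ← hzero]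
    simp [Submodule.inner_right_of_mem_orthogonal hker hx]
  · have hμ : Module.End.HasEigenvalue T (ev i) := Module.End.hasEigenvalue_of_hasEigenvector
      ⟨Module.End.mem_eigenspace_iff.mpr (hTb i), b.orthonormal.ne_zero i⟩
    exact mul_le_mul_of_nonneg_right (hc _ hpos hμ) (sq_nonneg _)

theorem Matrix.hasEigenvalue_toEuclideanLin_iff {ι : Type*} [Fintype ι] [DecidableEq ι]
    (A : Matrix ι ι ℝ) (μ : ℝ) :
    Module.End.HasEigenvalue (toEuclideanLin A) μ ↔ Module.End.HasEigenvalue A.mulVecLin μ := by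
  rw [Module.End.hasEigenvalue_iff_mem_spectrum, Module.End.hasEigenvalue_iff_mem_spectrum,
    ← Matrix.toLin'_apply', Matrix.spectrum_toLin', ← Matrix.spectrum_toLpLin 2]

theorem Matrix.PosSemidef.mul_dotProduct_self_le_of_forall_mulVec_eq_zero
    {ι : Type*} [Fintype ι] [DecidableEq ι] {A : Matrix ι ι ℝ} (hA : A.PosSemidef) {c : ℝ}
    (hc : ∀ μ : ℝ, 0 < μ → Module.End.HasEigenvalue A.mulVecLin μ → c ≤ μ)
    {x : ι → ℝ} (hx : ∀ y, A *ᵥ y = 0 → y ⬝ᵥ x = 0) :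
    c * (x ⬝ᵥ x) ≤ x ⬝ᵥ (A *ᵥ x) := by
  have hx' : WithLp.toLp 2 x ∈ (LinearMap.ker (toEuclideanLin A))ᗮ := by
    rw [Submodule.mem_orthogonal]
    intro y hy
    rw [EuclideanSpace.inner_eq_star_dotProduct]
    simpa [dotProduct_comm] using hx _ (congrArg WithLp.ofLp hy)
  have := (Matrix.isPositive_toEuclideanLin_iff.mpr hA).mul_norm_sq_le_inner_of_mem_orthogonal_ker
    (fun μ hμ hμA => hc μ hμ ((A.hasEigenvalue_toEuclideanLin_iff μ).mp hμA)) hx'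
  rwa [← real_inner_self_eq_norm_sq, EuclideanSpace.inner_eq_star_dotProduct,
    EuclideanSpace.inner_eq_star_dotProduct] at this

theorem dotProduct_self_nonneg {ι : Type*} [Fintype ι] (v : ι → ℝ) : 0 ≤ v ⬝ᵥ v :=
  Finset.sum_nonneg fun i _ => mul_self_nonneg (v i)

theorem dotProduct_sq_le_dotProduct_self_mul {ι : Type*} [Fintype ι] (v w : ι → ℝ) :
    (v ⬝ᵥ w) ^ 2 ≤ (v ⬝ᵥ v) * (w ⬝ᵥ w) := by
  simpa only [dotProduct, sq] using Finset.sum_mul_sq_le_sq_mul_sq Finset.univ v w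

theorem mul_dotProduct_le_dotProduct_self_of_mul_dotProduct_self_le {ι : Type*} [Fintype ι]
    {k : ℝ} (hk : 0 ≤ k) {w z : ι → ℝ} (hwz : k * (w ⬝ᵥ w) ≤ w ⬝ᵥ z) :
    k * (w ⬝ᵥ z) ≤ z ⬝ᵥ z := by
  rcases (dotProduct_self_nonneg w).eq_or_lt with hw | hw
  · rw [dotProduct_self_eq_zero.mp hw.symm, zero_dotProduct, mul_zero]
    exact dotProduct_self_nonneg z
  · have hcs := dotProduct_sq_le_dotProduct_self_mul w z
    have hd : 0 ≤ w ⬝ᵥ z := (mul_nonneg hk hw.le).trans hwz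
    refine le_of_mul_le_mul_left ?_ hw
    nlinarith

namespace Matrix

variable {m ι : Type*} [Fintype m] [Fintype ι] (X : Matrix m ι ℝ)

theorem dotProduct_transpose_mul_self_mulVec (u : ι → ℝ) :
    u ⬝ᵥ ((Xᵀ * X) *ᵥ u) = (X *ᵥ u) ⬝ᵥ (X *ᵥ u) := by
  rw [← mulVec_mulVec, dotProduct_mulVec, vecMul_transpose]

theorem posSemidef_transpose_mul_self : (Xᵀ * X).PosSemidef := by
  simpa using posSemidef_conjTranspose_mul_self X

theorem mul_dotProduct_self_transpose_mulVec_le [DecidableEq ι] {c : ℝ}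
    (hc : ∀ μ : ℝ, 0 < μ → Module.End.HasEigenvalue (Xᵀ * X).mulVecLin μ → c ≤ μ)
    (v : m → ℝ) :
    c * ((Xᵀ *ᵥ v) ⬝ᵥ (Xᵀ *ᵥ v)) ≤ (X *ᵥ (Xᵀ *ᵥ v)) ⬝ᵥ (X *ᵥ (Xᵀ *ᵥ v)) := by
  rw [← dotProduct_transpose_mul_self_mulVec X (Xᵀ *ᵥ v)]
  refine (posSemidef_transpose_mul_self X).mul_dotProduct_self_le_of_forall_mulVec_eq_zero hc
    fun y hy => ?_
  have hXy : X *ᵥ y = 0 := dotProduct_self_eq_zero.mp <| by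
    rw [← dotProduct_transpose_mul_self_mulVec, hy, dotProduct_zero]
  rw [dotProduct_mulVec, vecMul_transpose, hXy, zero_dotProduct]

end Matrix

namespace RidgeRegression

variable {m ι : Type*} [Fintype m] [Fintype ι] [DecidableEq ι] (X : Matrix m ι ℝ) {h : ℝ}

theorem dotProduct_mulVec_self (w : ι → ℝ) :
    w ⬝ᵥ ((Xᵀ * X + h • 1) *ᵥ w) = (X *ᵥ w) ⬝ᵥ (X *ᵥ w) + h * (w ⬝ᵥ w) := by
  rw [add_mulVec, dotProduct_add, dotProduct_transpose_mul_self_mulVec, smul_mulVec,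
    one_mulVec, dotProduct_smul, smul_eq_mul]

theorem posDef (hh : 0 < h) : (Xᵀ * X + h • 1).PosDef :=
  PosDef.posSemidef_add (posSemidef_transpose_mul_self X) (PosDef.one.smul hh)

theorem isUnit_det (hh : 0 < h) : IsUnit (Xᵀ * X + h • 1).det :=
  (isUnit_iff_isUnit_det _).mp (posDef X hh).isUnit

theorem mulVec_inv_mulVec (hh : 0 < h) (z : ι → ℝ) :
    (Xᵀ * X + h • 1) *ᵥ ((Xᵀ * X + h • 1)⁻¹ *ᵥ z) = z := by
  rw [mulVec_mulVec, mul_nonsing_inv _ (isUnit_det X hh), one_mulVec]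

theorem inv_mulVec_mulVec (hh : 0 < h) (z : ι → ℝ) :
    (Xᵀ * X + h • 1)⁻¹ *ᵥ ((Xᵀ * X + h • 1) *ᵥ z) = z := by
  rw [mulVec_mulVec, nonsing_inv_mul _ (isUnit_det X hh), one_mulVec]

theorem inv_mul_transpose [DecidableEq m] (hh : 0 < h) :
    (Xᵀ * X + h • 1)⁻¹ * Xᵀ = Xᵀ * (X * Xᵀ + h • 1)⁻¹ := by
  have hB : IsUnit (X * Xᵀ + h • 1).det := by simpa using isUnit_det Xᵀ hh
  have hcomm : Xᵀ * (X * Xᵀ + h • 1) = (Xᵀ * X + h • 1) * Xᵀ := by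
    simp only [Matrix.mul_add, Matrix.add_mul, Matrix.mul_assoc, Matrix.mul_smul,
      Matrix.smul_mul, Matrix.mul_one, Matrix.one_mul]
  calc (Xᵀ * X + h • 1)⁻¹ * Xᵀ
      = (Xᵀ * X + h • 1)⁻¹ * (Xᵀ * (X * Xᵀ + h • 1)) * (X * Xᵀ + h • 1)⁻¹ := by
        rw [Matrix.mul_assoc, Matrix.mul_assoc, mul_nonsing_inv _ hB, Matrix.mul_one]
    _ = Xᵀ * (X * Xᵀ + h • 1)⁻¹ := by
        rw [hcomm, ← Matrix.mul_assoc, nonsing_inv_mul _ (isUnit_det X hh), Matrix.one_mul]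

theorem error_eq (hh : 0 < h) {β θ : ι → ℝ} (hθ : X *ᵥ θ = X *ᵥ β) (l : ι → ℝ) (e : m → ℝ) :
    l ⬝ᵥ ((Xᵀ * X + h • 1)⁻¹ *ᵥ (Xᵀ *ᵥ (X *ᵥ β + e))) - l ⬝ᵥ θ
      = (X *ᵥ ((Xᵀ * X + h • 1)⁻¹ *ᵥ l)) ⬝ᵥ e + -(h * (l ⬝ᵥ ((Xᵀ * X + h • 1)⁻¹ *ᵥ θ))) := by
  set A := Xᵀ * X + h • 1
  have hswap : ∀ u, l ⬝ᵥ (A⁻¹ *ᵥ u) = (A⁻¹ *ᵥ l) ⬝ᵥ u := fun u => by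
    have hsymm : A⁻¹ᵀ = A⁻¹ := by simpa using (posDef X hh).isHermitian.inv.eq
    rw [dotProduct_mulVec, ← mulVec_transpose, hsymm]
  have hXβ : Xᵀ *ᵥ (X *ᵥ β) = A *ᵥ θ - h • θ := by
    rw [← hθ, mulVec_mulVec, add_mulVec, smul_mulVec, one_mulVec, add_sub_cancel_right]
  rw [mulVec_add, hXβ, mulVec_add, mulVec_sub, inv_mulVec_mulVec X hh, mulVec_smul,
    dotProduct_add, dotProduct_sub, dotProduct_smul, smul_eq_mul, hswap (Xᵀ *ᵥ e),
    dotProduct_mulVec (A⁻¹ *ᵥ l) Xᵀ e, vecMul_transpose]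
  ring

theorem dotProduct_self_mulVec_inv_le (hh : 0 < h) (l : ι → ℝ) :
    (X *ᵥ ((Xᵀ * X + h • 1)⁻¹ *ᵥ l)) ⬝ᵥ (X *ᵥ ((Xᵀ * X + h • 1)⁻¹ *ᵥ l)) ≤ (l ⬝ᵥ l) / h := by
  set w := (Xᵀ * X + h • 1)⁻¹ *ᵥ l
  have hquad := dotProduct_mulVec_self X (h := h) w
  rw [mulVec_inv_mulVec X hh] at hquad
  have hXw := dotProduct_self_nonneg (X *ᵥ w)
  have hw := mul_nonneg hh.le (dotProduct_self_nonneg w)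
  have hwl := mul_dotProduct_le_dotProduct_self_of_mul_dotProduct_self_le hh.le
    (w := w) (z := l) (by linarith)
  rw [le_div_iff₀ hh, mul_comm]
  calc h * ((X *ᵥ w) ⬝ᵥ (X *ᵥ w)) ≤ h * (w ⬝ᵥ l) :=
        mul_le_mul_of_nonneg_left (by linarith) hh.le
    _ ≤ l ⬝ᵥ l := hwl

theorem sq_add_mul_dotProduct_self_inv_mulVec_le [DecidableEq m] {c : ℝ}
    (hc : ∀ μ : ℝ, 0 < μ → Module.End.HasEigenvalue (Xᵀ * X).mulVecLin μ → c ≤ μ)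
    (hch : 0 ≤ c + h) (hh : 0 < h) {θ : ι → ℝ} (hθ : ∃ v, θ = Xᵀ *ᵥ v) :
    (c + h) ^ 2 * (((Xᵀ * X + h • 1)⁻¹ *ᵥ θ) ⬝ᵥ ((Xᵀ * X + h • 1)⁻¹ *ᵥ θ)) ≤ θ ⬝ᵥ θ := by
  obtain ⟨v, rfl⟩ := hθ
  have hrow : (Xᵀ * X + h • 1)⁻¹ *ᵥ (Xᵀ *ᵥ v) = Xᵀ *ᵥ ((X * Xᵀ + h • 1)⁻¹ *ᵥ v) := by
    rw [mulVec_mulVec, inv_mul_transpose X hh, ← mulVec_mulVec]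
  set w := (Xᵀ * X + h • 1)⁻¹ *ᵥ (Xᵀ *ᵥ v)
  have heig := mul_dotProduct_self_transpose_mulVec_le X hc ((X * Xᵀ + h • 1)⁻¹ *ᵥ v)
  rw [← hrow] at heig
  have hquad := dotProduct_mulVec_self X (h := h) w
  rw [mulVec_inv_mulVec X hh] at hquad
  have hlow : (c + h) * (w ⬝ᵥ w) ≤ w ⬝ᵥ (Xᵀ *ᵥ v) := by linarith
  calc (c + h) ^ 2 * (w ⬝ᵥ w) = (c + h) * ((c + h) * (w ⬝ᵥ w)) := by ring
    _ ≤ (c + h) * (w ⬝ᵥ (Xᵀ *ᵥ v)) := mul_le_mul_of_nonneg_left hlow hch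
    _ ≤ _ := mul_dotProduct_le_dotProduct_self_of_mul_dotProduct_self_le hch hlow

end RidgeRegression

theorem ProbabilityTheory.integral_dotProduct_add_sq {ι Ω : Type*} [Fintype ι]
    [MeasurableSpace Ω] {μ : Measure Ω} [IsProbabilityMeasure μ] {σ : ℝ} {ε : Ω → ι → ℝ}
    (hL2 : ∀ i, MemLp (fun ω => ε ω i) 2 μ)
    (hmean : ∀ i, ∫ ω, ε ω i ∂μ = 0)
    (hvar : ∀ i, ∫ ω, (ε ω i) ^ 2 ∂μ = σ ^ 2)
    (hindep : iIndepFun (fun i ω => ε ω i) μ)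
    (c : ι → ℝ) (b : ℝ) :
    ∫ ω, (c ⬝ᵥ ε ω + b) ^ 2 ∂μ = (c ⬝ᵥ c) * σ ^ 2 + b ^ 2 := by
  set Z : ι → Ω → ℝ := fun i ω => c i * ε ω i
  have hZ : ∀ i, MemLp (Z i) 2 μ := fun i => (hL2 i).const_mul (c i)
  have hsum : (fun ω => c ⬝ᵥ ε ω) = ∑ i, Z i := by
    ext ω; simp [Z, dotProduct]
  have hY : MemLp (fun ω => c ⬝ᵥ ε ω) 2 μ := hsum ▸ memLp_finsetSum' _ fun i _ => hZ i
  have hvarε : ∀ i, Var[fun ω => ε ω i; μ] = σ ^ 2 := fun i => by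
    rw [variance_eq_sub (hL2 i)]
    simp [hvar, hmean]
  have hvarY : Var[fun ω => c ⬝ᵥ ε ω; μ] = (c ⬝ᵥ c) * σ ^ 2 := by
    rw [hsum, IndepFun.variance_sum (fun i _ => hZ i)]
    · simp [Z, variance_const_mul, hvarε, dotProduct, Finset.sum_mul, sq]
    · intro i _ j _ hij
      exact (hindep.indepFun hij).comp (measurable_const_mul (c i)) (measurable_const_mul (c j))
  have hmeanY : ∫ ω, c ⬝ᵥ ε ω ∂μ = 0 := by
    simp only [dotProduct]
    rw [integral_finsetSum _ fun i _ => ((hL2 i).integrable one_le_two).const_mul (c i)]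
    simp [integral_const_mul, hmean]
  have h2 := variance_eq_sub (X := fun ω => c ⬝ᵥ ε ω + b) (hY.add (memLp_const b))
  rw [variance_add_const hY.aestronglyMeasurable, hvarY,
    integral_add (hY.integrable one_le_two) (integrable_const b), hmeanY] at h2
  simp only [Pi.pow_apply, integral_const, probReal_univ, smul_eq_mul, one_mul, zero_add] at h2
  linarith

theorem ridge_linear_combination_mse_bound_general
    {n p : ℕ} {Ω : Type*} [MeasurableSpace Ω] (μ : Measure Ω) [IsProbabilityMeasure μ]
    (X : Matrix (Fin n) (Fin p) ℝ)
    (β θ : Fin p → ℝ)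
    (hθmem : ∃ v : Fin n → ℝ, θ = Xᵀ *ᵥ v) (hθproj : X *ᵥ θ = X *ᵥ β)
    (σ : ℝ) (ε : Ω → Fin n → ℝ)
    (hL2 : ∀ i, MemLp (fun ω => ε ω i) 2 μ)
    (hmean : ∀ i, ∫ ω, ε ω i ∂μ = 0)
    (hvar : ∀ i, ∫ ω, (ε ω i) ^ 2 ∂μ = σ ^ 2)
    (hindep : iIndepFun (fun i ω => ε ω i) μ)
    (lam1 : ℝ) (hlam_pos : 0 < lam1)
    (hlam_min : ∀ lam : ℝ, 0 < lam →
      Module.End.HasEigenvalue (Xᵀ * X).mulVecLin lam → lam1 ≤ lam)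
    (h : ℝ) (hh : 0 < h)
    (l : Fin p → ℝ) (hl : ∑ j, l j ^ 2 = 1) :
    ∫ ω, (∑ j, l j * ((Xᵀ * X + h • 1)⁻¹ *ᵥ (Xᵀ *ᵥ (X *ᵥ β + ε ω))) j
          - ∑ j, l j * θ j) ^ 2 ∂μ
      ≤ σ ^ 2 / h + (h / (lam1 + h)) ^ 2 * ∑ j, θ j ^ 2 := by
  have hll : l ⬝ᵥ l = 1 := by simpa only [dotProduct, sq] using hl
  have hθθ : θ ⬝ᵥ θ = ∑ j, θ j ^ 2 := by simp only [dotProduct, sq]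
  set w := (Xᵀ * X + h • 1)⁻¹ *ᵥ θ
  have herr : ∀ ω, ∑ j, l j * ((Xᵀ * X + h • 1)⁻¹ *ᵥ (Xᵀ *ᵥ (X *ᵥ β + ε ω))) j
      - ∑ j, l j * θ j = (X *ᵥ ((Xᵀ * X + h • 1)⁻¹ *ᵥ l)) ⬝ᵥ ε ω + -(h * (l ⬝ᵥ w)) :=
    fun ω => RidgeRegression.error_eq X hh hθproj l (ε ω)
  have hvariance := RidgeRegression.dotProduct_self_mulVec_inv_le X hh l
  have hbias : (lam1 + h) ^ 2 * (w ⬝ᵥ w) ≤ θ ⬝ᵥ θ :=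
    RidgeRegression.sq_add_mul_dotProduct_self_inv_mulVec_le X hlam_min
      (by positivity) hh hθmem
  have hww : w ⬝ᵥ w ≤ (θ ⬝ᵥ θ) / (lam1 + h) ^ 2 :=
    (le_div_iff₀ (by positivity)).mpr (by rwa [mul_comm])
  have hlw : (l ⬝ᵥ w) ^ 2 ≤ w ⬝ᵥ w := by
    simpa only [hll, one_mul] using dotProduct_sq_le_dotProduct_self_mul l w
  rw [hll] at hvariance
  simp_rw [herr]
  rw [integral_dotProduct_add_sq hL2 hmean hvar hindep, ← hθθ]
  gcongr ?_ + ?_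
  · calc _ ≤ 1 / h * σ ^ 2 := by gcongr
      _ = σ ^ 2 / h := by ring
  · calc (-(h * (l ⬝ᵥ w))) ^ 2 = h ^ 2 * (l ⬝ᵥ w) ^ 2 := by ring
      _ ≤ h ^ 2 * ((θ ⬝ᵥ θ) / (lam1 + h) ^ 2) := by gcongr; exact hlw.trans hww
      _ = (h / (lam1 + h)) ^ 2 * (θ ⬝ᵥ θ) := by rw [div_pow]; ring

/-- Under the linear model `y = Xβ + ε` with deterministic design `X`, where `ε` has
independent components of mean `0` and variance `σ²` and `θ` is the projection of `β`
onto the row space of `X`, for any `h > 0` and any `l ∈ ℝᵖ` with `‖l‖ = 1`, the mean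
squared error of the ridge regression estimator `θ̂ = (XᵀX + hI_p)⁻¹ Xᵀ y` satisfies
`E(lᵀθ̂ − lᵀθ)² ≤ σ²/h + (h/(λ₁+h))² ‖θ‖²`, where `λ₁` is the smallest positive
eigenvalue of `XᵀX`. -/
theorem ridge_linear_combination_mse_bound
    {n p : ℕ} {Ω : Type*} [MeasurableSpace Ω] (μ : Measure Ω) [IsProbabilityMeasure μ]
    (X : Matrix (Fin n) (Fin p) ℝ)
    (β θ : Fin p → ℝ)
    (hθmem : ∃ v : Fin n → ℝ, θ = Xᵀ *ᵥ v) (hθproj : X *ᵥ θ = X *ᵥ β)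
    (σ : ℝ) (ε : Ω → Fin n → ℝ)
    (hmeas : ∀ i, Measurable fun ω => ε ω i)
    (hL2 : ∀ i, MemLp (fun ω => ε ω i) 2 μ)
    (hmean : ∀ i, ∫ ω, ε ω i ∂μ = 0)
    (hvar : ∀ i, ∫ ω, (ε ω i) ^ 2 ∂μ = σ ^ 2)
    (hindep : iIndepFun (fun i ω => ε ω i) μ)
    (lam1 : ℝ) (hlam_pos : 0 < lam1)
    (hlam_eig : Module.End.HasEigenvalue (Xᵀ * X).mulVecLin lam1)
    (hlam_min : ∀ lam : ℝ, 0 < lam →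
      Module.End.HasEigenvalue (Xᵀ * X).mulVecLin lam → lam1 ≤ lam)
    (h : ℝ) (hh : 0 < h)
    (l : Fin p → ℝ) (hl : ∑ j, l j ^ 2 = 1) :
    ∫ ω, (∑ j, l j * ((Xᵀ * X + h • 1)⁻¹ *ᵥ (Xᵀ *ᵥ (X *ᵥ β + ε ω))) j
          - ∑ j, l j * θ j) ^ 2 ∂μ
      ≤ σ ^ 2 / h + (h / (lam1 + h)) ^ 2 * ∑ j, θ j ^ 2 :=
  ridge_linear_combination_mse_bound_general μ X β θ hθmem hθproj σ ε hL2 hmean hvar hindep lam1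
    hlam_pos hlam_min h hh l hl
end
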